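/- Let N ≥ 2, 1 < p < N, 0 ≤ s < p, s < σ < N, 0 < σ + s ≤ 2p, set p_{s,σ} := (2N−σ−s)p/(2(N−p)), let 0 ≤ μ < μ̄ := ((N−p)/p)^p, and let γ₁ be the unique solution of (p−1)γ^p − (N−p)γ^{p−1} + μ = 0 in the interval [0, (N−p)/p). Then p_{s,σ}·γ₁ + 1 < N holds if and only if either σ + s ≥ 2, or σ + s < 2 and ((N−1)/p_{s,σ})^{p−1}·[(p−1)(N−1)/p_{s,σ} − (N−p)] + μ < 0. -/

import Mathlib

/-- The critical exponent `p_{s,σ} = (2N - σ - s)p / (2(N - p))` of the weighted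
nonlocal nonlinearity. -/
noncomputable def pcrit (N : ℕ) (p s σ : ℝ) : ℝ :=
  (2 * (N : ℝ) - σ - s) * p / (2 * ((N : ℝ) - p))

set_option maxHeartbeats 1000000 in
/-- Remark 1.8: `p_{s,σ}·γ₁ + 1 < N` is equivalent to
`σ + s ≥ 2`, or `σ + s < 2` together with
`((N-1)/p_{s,σ})^{p-1}·[(p-1)(N-1)/p_{s,σ} - (N-p)] + μ < 0`,
where `γ₁` is the unique root of the indicial equation in `[0, (N-p)/p)`. -/
theorem stmt_9 (N : ℕ) (hN : 2 ≤ N) (p s σ μ γ₁ : ℝ)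
    (hp1 : 1 < p) (hpN : p < (N : ℝ)) (hs0 : 0 ≤ s) (hsp : s < p)
    (hsσ : s < σ) (hσN : σ < (N : ℝ)) (hss0 : 0 < σ + s) (hss : σ + s ≤ 2 * p)
    (hμ0 : 0 ≤ μ) (hμ : μ < (((N : ℝ) - p) / p) ^ p)
    (hγ₁0 : 0 ≤ γ₁) (hγ₁lt : γ₁ < ((N : ℝ) - p) / p)
    (hγ₁eq : (p - 1) * γ₁ ^ p - ((N : ℝ) - p) * γ₁ ^ (p - 1) + μ = 0)
    (huniq : ∀ γ : ℝ, 0 ≤ γ → γ < ((N : ℝ) - p) / p →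
      (p - 1) * γ ^ p - ((N : ℝ) - p) * γ ^ (p - 1) + μ = 0 → γ = γ₁) :
    pcrit N p s σ * γ₁ + 1 < (N : ℝ) ↔
      (2 ≤ σ + s ∨ (σ + s < 2 ∧
        (((N : ℝ) - 1) / pcrit N p s σ) ^ (p - 1) *
            ((p - 1) * ((N : ℝ) - 1) / pcrit N p s σ - ((N : ℝ) - p)) + μ < 0)) := by
  have hN2 : (2:ℝ) ≤ (N:ℝ) := by exact_mod_cast hN
  have hNp : (0:ℝ) < (N:ℝ) - p := by linarith
  have hp0 : (0:ℝ) < p := by linarith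
  have hq : 0 < pcrit N p s σ := by
    unfold pcrit
    exact div_pos (mul_pos (by linarith) hp0) (by linarith)
  set q := pcrit N p s σ with hqdef
  set b := ((N:ℝ) - p) / p with hbdef
  have hb : 0 < b := div_pos hNp hp0
  set t := ((N:ℝ) - 1) / q with htdef
  have ht : 0 < t := div_pos (by linarith) hq
  have hqval : q * ((N:ℝ) - p) = (2*(N:ℝ) - σ - s) * p / 2 := by
    rw [hqdef]; unfold pcrit; field_simp
  have hlhs : q * γ₁ + 1 < (N:ℝ) ↔ γ₁ < t := by
    rw [htdef, lt_div_iff₀ hq]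
    constructor <;> intro h <;> nlinarith
  set F : ℝ → ℝ := fun γ => (p - 1) * γ ^ p - ((N:ℝ) - p) * γ ^ (p - 1) + μ with hF
  have hcont : Continuous F := by
    apply Continuous.add _ continuous_const
    apply Continuous.sub
    · exact continuous_const.mul (continuous_iff_continuousAt.2 fun x =>
        Real.continuousAt_rpow_const x p (Or.inr hp0.le))
    · exact continuous_const.mul (continuous_iff_continuousAt.2 fun x =>
        Real.continuousAt_rpow_const x (p-1) (Or.inr (by linarith : (0:ℝ) ≤ p-1)))
  have hF0 : F 0 = μ := by
    simp [hF, Real.zero_rpow (by linarith : p ≠ 0),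
      Real.zero_rpow (by intro h; linarith [sub_eq_zero.mp h] : p - 1 ≠ 0)]
  have hFb : F b < 0 := by
    have hbne : b ≠ 0 := ne_of_gt hb
    have hsplit : b ^ p = b ^ (p-1) * b := by
      rw [← Real.rpow_add_one hbne (p-1)]; ring_nf
    have : F b = -(b ^ p) + μ := by
      simp only [hF]
      rw [hsplit]
      have hb2 : (p - 1) * b - ((N:ℝ) - p) = -b := by
        rw [hbdef]; field_simp; ring
      nlinarith [hb2]
    rw [this]; linarith
  have key : ∀ x, 0 < x → x < b → (γ₁ < x ↔ F x < 0) := by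
    intro x hx0 hxb
    constructor
    · intro hlt
      by_contra h
      push_neg at h
      have hsub : Set.Icc (F b) (F x) ⊆ F '' Set.Icc x b :=
        intermediate_value_Icc' (le_of_lt hxb) hcont.continuousOn
      obtain ⟨γ', hmem, heq⟩ := hsub ⟨le_of_lt hFb, h⟩
      have hγ'b : γ' < b := by
        rcases lt_or_eq_of_le hmem.2 with h' | h'
        · exact h'
        · rw [h'] at heq; rw [heq] at hFb; exact absurd hFb (lt_irrefl 0)
      have hγ'eq := huniq γ' (le_trans (le_of_lt hx0) hmem.1) hγ'b heq
      linarith [hmem.1]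
    · intro hFx
      by_contra h
      push_neg at h
      have hsub : Set.Icc (F x) (F 0) ⊆ F '' Set.Icc 0 x :=
        intermediate_value_Icc' (le_of_lt hx0) hcont.continuousOn
      obtain ⟨γ', hmem, heq⟩ := hsub ⟨le_of_lt hFx, by rw [hF0]; exact hμ0⟩
      have hγ'eq := huniq γ' hmem.1 (lt_of_le_of_lt hmem.2 hxb) heq
      have hx : γ' = x := le_antisymm hmem.2 (hγ'eq ▸ h)
      rw [hx] at heq
      have : F x = 0 := heq
      linarith
  have hFt_eq : F t = t ^ (p-1) * ((p - 1) * ((N:ℝ) - 1) / q - ((N:ℝ) - p)) + μ := by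
    have htne : t ≠ 0 := ne_of_gt ht
    have hsplit : t ^ p = t ^ (p-1) * t := by
      rw [← Real.rpow_add_one htne (p-1)]; ring_nf
    simp only [hF]
    rw [hsplit, mul_div_assoc, ← htdef]
    ring
  rcases le_or_gt 2 (σ + s) with hcase | hcase
  · have hbt : b ≤ t := by
      rw [htdef, hbdef, div_le_div_iff₀ hp0 hq]
      nlinarith [hqval, mul_nonneg (by linarith : (0:ℝ) ≤ σ + s - 2) hp0.le]
    constructor
    · intro _; exact Or.inl hcase
    · intro _
      exact hlhs.2 (lt_of_lt_of_le hγ₁lt hbt)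
  · have htb : t < b := by
      rw [htdef, hbdef, div_lt_div_iff₀ hq hp0]
      nlinarith [hqval, mul_pos (by linarith : (0:ℝ) < 2 - (σ + s)) hp0]
    rw [hlhs, key t ht htb, hFt_eq]
    constructor
    · intro hFt
      exact Or.inr ⟨hcase, hFt⟩
    · rintro (h | ⟨_, h⟩)
      · linarith
      · exact h
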